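/- Let 𝓗 be a finite set of subgroups of a finite group G, each of prime order (possibly different primes), and suppose distinct subgroups in 𝓗 intersect trivially. Then for any two-outcome POVM {M₀, M₁} on (ℂ^G)^{⊗k}, min{ tr(M₀ (I/|G|)^{⊗k}), min_{H∈𝓗} tr(M₁ ρ_H^{⊗k}) } ≤ 1/2 + (1/4)√( (max_{H∈𝓗}|H|)^k / |𝓗| ). -/

import Mathlib

/-!
Against the maximally mixed state `σ` and the average `ρ̄ = 𝔼_H ρ_H^{⊗k}` of the hidden-subgroup
states, the minimum is at most the mean of the two success probabilities, `1/2 + tr(M₀(σ - ρ̄))/2`.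
For `0 ≤ M₀ ≤ 1` and a traceless Hermitian `X`, `tr(M₀X)` is at most the sum of the positive
eigenvalues of `X`, that is `‖X‖₁/2 ≤ √(dim · tr X²)/2` by Cauchy–Schwarz. Finally
`dim · tr (σ - ρ̄)² = dim · tr ρ̄² - 1`, and `tr(ρ_H ρ_H') = |H ⊓ H'|/|G|` turns `dim · tr ρ̄²` into
`𝔼_{H,H'} |H ⊓ H'|^k`; when distinct subgroups meet trivially only the diagonal terms exceed `1`,
so this is at most `1 + ((max |H|)^k - 1)/|𝓗|`.
-/

noncomputable section

open scoped BigOperators ComplexOrder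

open Classical in
/-- The coset state `ρ_H = (1/|G|) ∑_g |gH⟩⟨gH|`; its `(x, y)` entry is
`1/|G|` if `x⁻¹ y ∈ H` and `0` otherwise. -/
def cosetState {G : Type*} [Group G] [Fintype G] (H : Subgroup G) : Matrix G G ℂ :=
  fun x y => if x⁻¹ * y ∈ H then (1 : ℂ) / (Fintype.card G) else 0

/-- `k`-fold tensor power of a matrix. -/
def tensorPow {n : Type*} [Fintype n] (M : Matrix n n ℂ) (k : ℕ) :
    Matrix (Fin k → n) (Fin k → n) ℂ :=
  fun x y => ∏ i, M (x i) (y i)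

/-- Trace norm `‖Y‖₁ = tr √(Yᴴ Y)`. -/
def traceNorm {n : Type*} [Fintype n] [DecidableEq n] (Y : Matrix n n ℂ) : ℝ :=
  (((Matrix.posSemidef_conjTranspose_mul_self Y).1.eigenvectorUnitary.1 *
      Matrix.diagonal (fun i => ((Real.sqrt ((Matrix.posSemidef_conjTranspose_mul_self Y).1.eigenvalues i) : ℝ) : ℂ)) *
      (star (Matrix.posSemidef_conjTranspose_mul_self Y).1.eigenvectorUnitary : Matrix n n ℂ)).trace).re

/-- Operator (spectral) norm of a matrix. -/
def opNorm {n : Type*} [Fintype n] [DecidableEq n] (M : Matrix n n ℂ) : ℝ :=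
  ‖Matrix.toEuclideanCLM (𝕜 := ℂ) M‖

/-- Square root of the Moore–Penrose pseudoinverse of a Hermitian matrix
(junk value `0` on non-Hermitian input). -/
def pinvSqrt {n : Type*} [Fintype n] [DecidableEq n] (A : Matrix n n ℂ) : Matrix n n ℂ :=
  if h : A.IsHermitian then
    h.eigenvectorUnitary.1 *
      Matrix.diagonal (fun i => ((Real.sqrt (h.eigenvalues i))⁻¹ : ℂ)) *
      (star h.eigenvectorUnitary : Matrix n n ℂ)
  else 0

open Finset

section TensorPow

variable {n : Type*} [Fintype n]

lemma tensorPow_mul (A B : Matrix n n ℂ) (k : ℕ) :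
    tensorPow A k * tensorPow B k = tensorPow (A * B) k := by
  ext x z
  simp only [Matrix.mul_apply, tensorPow, ← prod_mul_distrib]
  exact (Fintype.prod_sum fun i b => A (x i) b * B b (z i)).symm

lemma trace_tensorPow (A : Matrix n n ℂ) (k : ℕ) : (tensorPow A k).trace = A.trace ^ k := by
  simp only [Matrix.trace, Matrix.diag, tensorPow]
  rw [Fintype.sum_pow]

lemma tensorPow_smul (c : ℂ) (A : Matrix n n ℂ) (k : ℕ) :
    tensorPow (c • A) k = c ^ k • tensorPow A k := by
  ext x y
  simp [tensorPow, prod_mul_distrib]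

lemma tensorPow_one [DecidableEq n] (k : ℕ) : tensorPow (1 : Matrix n n ℂ) k = 1 := by
  ext x y
  simp [tensorPow, Matrix.one_apply, prod_boole, funext_iff]

lemma tensorPow_inv_card_smul_one [DecidableEq n] (k : ℕ) :
    tensorPow ((1 / (Fintype.card n : ℂ)) • (1 : Matrix n n ℂ)) k =
      (Fintype.card (Fin k → n) : ℂ)⁻¹ • 1 := by
  rw [tensorPow_smul, tensorPow_one, Fintype.card_fun, Fintype.card_fin, one_div, inv_pow,
    Nat.cast_pow]

lemma Matrix.IsHermitian.tensorPow {A : Matrix n n ℂ} (hA : A.IsHermitian) (k : ℕ) :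
    (tensorPow A k).IsHermitian := by
  ext x y
  simp only [Matrix.conjTranspose_apply, _root_.tensorPow, star_prod]
  exact prod_congr rfl fun i _ => hA.apply (x i) (y i)

end TensorPow

section CosetState

variable {G : Type*} [Group G] [Fintype G]

lemma isHermitian_cosetState (H : Subgroup G) : (cosetState H).IsHermitian := by
  ext x y
  have hmem : y⁻¹ * x ∈ H ↔ x⁻¹ * y ∈ H := by rw [← inv_mem_iff, mul_inv_rev, inv_inv]
  by_cases h : x⁻¹ * y ∈ H <;> simp [cosetState, h, hmem]

lemma trace_cosetState (H : Subgroup G) : (cosetState H).trace = 1 := by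
  simp [Matrix.trace, cosetState, H.one_mem]

lemma sum_cosetState_mul_cosetState_apply (H H' : Subgroup G) (x : G) :
    ∑ y, cosetState H x y * cosetState H' y x =
      Nat.card ↥(H ⊓ H') / (Fintype.card G : ℂ) ^ 2 := by
  classical
  rw [← Equiv.sum_comp (Equiv.mulLeft x)]
  have hterm : ∀ z : G, cosetState H x (x * z) * cosetState H' (x * z) x =
      if z ∈ H ⊓ H' then ((Fintype.card G : ℂ) ^ 2)⁻¹ else 0 := fun z => by
    by_cases hz : z ∈ H <;> by_cases hz' : z ∈ H' <;> simp [cosetState, hz, hz', sq]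
  simp only [Equiv.coe_mulLeft, hterm, sum_ite, sum_const_zero, add_zero, sum_const, nsmul_eq_mul,
    div_eq_mul_inv, Nat.card_eq_fintype_card, Fintype.card_subtype]

lemma trace_cosetState_mul_cosetState (H H' : Subgroup G) :
    (cosetState H * cosetState H').trace = Nat.card ↥(H ⊓ H') / (Fintype.card G : ℂ) := by
  have hG : (Fintype.card G : ℂ) ≠ 0 := Nat.cast_ne_zero.mpr Fintype.card_ne_zero
  simp only [Matrix.trace, Matrix.diag, Matrix.mul_apply, sum_cosetState_mul_cosetState_apply,
    sum_const, card_univ, nsmul_eq_mul]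
  field_simp

end CosetState

section SumBounds

variable {ι : Type*}

lemma two_mul_sum_posPart_eq_sum_abs {s : Finset ι} {f : ι → ℝ} (h : ∑ i ∈ s, f i = 0) :
    2 * ∑ i ∈ s, (f i)⁺ = ∑ i ∈ s, |f i| := by
  have hpos_neg : ∑ i ∈ s, (f i)⁺ - ∑ i ∈ s, (f i)⁻ = 0 := by
    rw [← sum_sub_distrib]; simpa only [posPart_sub_negPart] using h
  rw [← sum_congr rfl fun i _ => posPart_add_negPart (f i), sum_add_distrib]
  linarith

lemma sum_abs_le_sqrt_card_mul_sum_sq (s : Finset ι) (f : ι → ℝ) :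
    ∑ i ∈ s, |f i| ≤ √(#s * ∑ i ∈ s, f i ^ 2) := by
  refine Real.le_sqrt_of_sq_le ?_
  simpa only [sq_abs] using sq_sum_le_card_mul_sum_sq (s := s) (f := fun i => |f i|)

end SumBounds

section TraceBound

open scoped Matrix

variable {n : Type*} [Fintype n] [DecidableEq n]

lemma Matrix.IsHermitian.trace_mul_self {X : Matrix n n ℂ} (hX : X.IsHermitian) :
    (X * X).trace = ((∑ i, hX.eigenvalues i ^ 2 : ℝ) : ℂ) := by
  conv_lhs => rw [hX.spectral_theorem, ← map_mul, Unitary.conjStarAlgAut_apply]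
  rw [Matrix.trace_mul_cycle, Unitary.coe_star_mul_self, one_mul, Matrix.diagonal_mul_diagonal,
    Matrix.trace_diagonal]
  simp [sq]

lemma re_trace_mul_le_sum_posPart_eigenvalues {M X : Matrix n n ℂ} (hM : M.PosSemidef)
    (hM' : (1 - M).PosSemidef) (hX : X.IsHermitian) :
    (M * X).trace.re ≤ ∑ i, (hX.eigenvalues i)⁺ := by
  set U : Matrix n n ℂ := ↑hX.eigenvectorUnitary
  have hUU : Uᴴ * U = 1 := Unitary.coe_star_mul_self hX.eigenvectorUnitary
  set N := Uᴴ * M * U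
  have hN : N.PosSemidef := hM.conjTranspose_mul_mul_same U
  have hN' : (1 - N).PosSemidef := by
    simpa [N, Matrix.mul_sub, Matrix.sub_mul, hUU] using hM'.conjTranspose_mul_mul_same U
  have htrace : (M * X).trace = ∑ i, N i i * hX.eigenvalues i := by
    conv_lhs => rw [hX.spectral_theorem, Unitary.conjStarAlgAut_apply, ← Matrix.mul_assoc,
      Matrix.trace_mul_cycle, Matrix.star_eq_conjTranspose, ← Matrix.mul_assoc]
    simp [N, U, Matrix.trace, Matrix.mul_diagonal]
  rw [htrace, Complex.re_sum]
  refine sum_le_sum fun i _ => ?_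
  have h0 : 0 ≤ (N i i).re := (Complex.nonneg_iff.mp hN.diag_nonneg).1
  have h1 : (N i i).re ≤ 1 := by
    have := (Complex.nonneg_iff.mp (hN'.diag_nonneg (i := i))).1
    simp only [Matrix.sub_apply, Matrix.one_apply_eq, Complex.sub_re, Complex.one_re] at this
    linarith
  simp only [Complex.mul_re, Complex.ofReal_re, Complex.ofReal_im, mul_zero, sub_zero]
  exact (mul_le_mul_of_nonneg_left (le_posPart _) h0).trans
    (mul_le_of_le_one_left (posPart_nonneg _) h1)

theorem re_trace_mul_le_sqrt_card_mul_re_trace_mul_self_div_two {M X : Matrix n n ℂ}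
    (hM : M.PosSemidef) (hM' : (1 - M).PosSemidef) (hX : X.IsHermitian) (htr : X.trace = 0) :
    (M * X).trace.re ≤ √(Fintype.card n * (X * X).trace.re) / 2 := by
  have hsum : ∑ i, hX.eigenvalues i = 0 := by
    simpa using congrArg Complex.re (hX.trace_eq_sum_eigenvalues.symm.trans htr)
  have hsq : (X * X).trace.re = ∑ i, hX.eigenvalues i ^ 2 := by
    rw [hX.trace_mul_self, Complex.ofReal_re]
  calc (M * X).trace.re ≤ ∑ i, (hX.eigenvalues i)⁺ :=
        re_trace_mul_le_sum_posPart_eigenvalues hM hM' hX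
    _ = (∑ i, |hX.eigenvalues i|) / 2 := by rw [← two_mul_sum_posPart_eq_sum_abs hsum]; ring
    _ ≤ √(Fintype.card n * (X * X).trace.re) / 2 := by
        rw [hsq]; gcongr; exact sum_abs_le_sqrt_card_mul_sum_sq univ _

end TraceBound

section Mixture

variable {n ι : Type*}

lemma Matrix.isHermitian_expect {s : Finset ι} {ρ : ι → Matrix n n ℂ}
    (hρ : ∀ i ∈ s, (ρ i).IsHermitian) : (𝔼 i ∈ s, ρ i).IsHermitian :=
  (IsSelfAdjoint.all _).smul (isSelfAdjoint_sum s hρ)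

variable [Fintype n]

lemma Matrix.trace_expect (s : Finset ι) (ρ : ι → Matrix n n ℂ) :
    (𝔼 i ∈ s, ρ i).trace = 𝔼 i ∈ s, (ρ i).trace :=
  map_expect ((Matrix.traceLinearMap n ℂ ℂ).restrictScalars ℚ≥0) _ _

lemma Matrix.trace_expect_eq_one {s : Finset ι} (hs : s.Nonempty) {ρ : ι → Matrix n n ℂ}
    (hρ : ∀ i ∈ s, (ρ i).trace = 1) : (𝔼 i ∈ s, ρ i).trace = 1 := by
  rw [Matrix.trace_expect, expect_congr rfl hρ, expect_const hs]

variable [DecidableEq n]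

theorem min_re_trace_le_half_add_re_trace_mul_sub_expect {s : Finset ι} (hs : s.Nonempty)
    (σ : Matrix n n ℂ) {ρ : ι → Matrix n n ℂ} (hρ : ∀ i ∈ s, (ρ i).trace = 1)
    {M₀ M₁ : Matrix n n ℂ} (hM : M₀ + M₁ = 1) :
    min (M₀ * σ).trace.re (s.inf' hs fun i => (M₁ * ρ i).trace.re) ≤
      1 / 2 + (M₀ * (σ - 𝔼 i ∈ s, ρ i)).trace.re / 2 := by
  have hinf : s.inf' hs (fun i => (M₁ * ρ i).trace.re) ≤ (M₁ * 𝔼 i ∈ s, ρ i).trace.re := by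
    rw [mul_expect s ρ M₁, Matrix.trace_expect, Complex.re_expect]
    exact le_expect hs fun i hi => inf'_le _ hi
  have hM₁ : (M₁ * 𝔼 i ∈ s, ρ i).trace.re = 1 - (M₀ * 𝔼 i ∈ s, ρ i).trace.re := by
    rw [eq_sub_of_add_eq' hM, Matrix.sub_mul, Matrix.one_mul, Matrix.trace_sub,
      Matrix.trace_expect_eq_one hs hρ, Complex.sub_re, Complex.one_re]
  rw [Matrix.mul_sub, Matrix.trace_sub, Complex.sub_re]
  linarith [min_le_left (M₀ * σ).trace.re (s.inf' hs fun i => (M₁ * ρ i).trace.re),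
    min_le_right (M₀ * σ).trace.re (s.inf' hs fun i => (M₁ * ρ i).trace.re)]

lemma trace_mul_self_inv_card_smul_one_sub [Nonempty n] {ρ : Matrix n n ℂ}
    (hρ : ρ.trace = 1) :
    (((Fintype.card n : ℂ)⁻¹ • 1 - ρ) * ((Fintype.card n : ℂ)⁻¹ • 1 - ρ)).trace =
      (ρ * ρ).trace - (Fintype.card n : ℂ)⁻¹ := by
  have hn : (Fintype.card n : ℂ) ≠ 0 := Nat.cast_ne_zero.mpr Fintype.card_ne_zero
  simp only [Matrix.sub_mul, Matrix.mul_sub, Matrix.smul_mul, Matrix.mul_smul, Matrix.one_mul,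
    Matrix.mul_one, Matrix.trace_sub, Matrix.trace_smul, Matrix.trace_one, hρ, smul_eq_mul]
  field_simp
  ring

end Mixture

section CosetMixture

variable {G : Type*} [Group G]

lemma expect_card_inf_pow_le {𝓗 : Finset (Subgroup G)}
    (htriv : ∀ H ∈ 𝓗, ∀ H' ∈ 𝓗, H ≠ H' → Nat.card ↥(H ⊓ H') = 1) {H : Subgroup G} (hH : H ∈ 𝓗)
    (k : ℕ) :
    𝔼 H' ∈ 𝓗, (Nat.card ↥(H ⊓ H') : ℝ) ^ k ≤
      (((𝓗.sup fun H => Nat.card ↥H : ℕ) : ℝ) ^ k + ((𝓗.card : ℝ) - 1)) / (𝓗.card : ℝ) := by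
  classical
  have hoff : ∑ H' ∈ 𝓗.erase H, (Nat.card ↥(H ⊓ H') : ℝ) ^ k = (𝓗.card : ℝ) - 1 := by
    rw [sum_congr rfl fun H' hH' => by
      rw [htriv H hH H' (mem_of_mem_erase hH') (ne_of_mem_erase hH').symm, Nat.cast_one, one_pow]]
    rw [sum_const, card_erase_of_mem hH, nsmul_one, Nat.cast_pred (card_pos.mpr ⟨H, hH⟩)]
  have hH_le : Nat.card ↥H ≤ 𝓗.sup fun H => Nat.card ↥H :=
    le_sup (f := fun H : Subgroup G => Nat.card ↥H) hH
  rw [expect_eq_sum_div_card, ← add_sum_erase _ _ hH, inf_idem, hoff]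
  gcongr

variable [Fintype G]

def cosetMixture (𝓗 : Finset (Subgroup G)) (k : ℕ) : Matrix (Fin k → G) (Fin k → G) ℂ :=
  𝔼 H ∈ 𝓗, tensorPow (cosetState H) k

lemma trace_tensorPow_cosetState (H : Subgroup G) (k : ℕ) :
    (tensorPow (cosetState H) k).trace = 1 := by
  rw [trace_tensorPow, trace_cosetState, one_pow]

lemma isHermitian_cosetMixture (𝓗 : Finset (Subgroup G)) (k : ℕ) :
    (cosetMixture 𝓗 k).IsHermitian :=
  Matrix.isHermitian_expect fun H _ => (isHermitian_cosetState H).tensorPow k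

lemma trace_cosetMixture {𝓗 : Finset (Subgroup G)} (h𝓗 : 𝓗.Nonempty) (k : ℕ) :
    (cosetMixture 𝓗 k).trace = 1 :=
  Matrix.trace_expect_eq_one h𝓗 fun H _ => trace_tensorPow_cosetState H k

lemma trace_cosetMixture_mul_self (𝓗 : Finset (Subgroup G)) (k : ℕ) :
    (cosetMixture 𝓗 k * cosetMixture 𝓗 k).trace =
      ((𝔼 H ∈ 𝓗, 𝔼 H' ∈ 𝓗, ((Nat.card ↥(H ⊓ H') : ℝ) / Fintype.card G) ^ k : ℝ) : ℂ) := by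
  classical
  rw [cosetMixture, expect_mul_expect 𝓗 𝓗 (fun H => tensorPow (cosetState H) k)
    (fun H => tensorPow (cosetState H) k)]
  simp only [Matrix.trace_expect, tensorPow_mul, trace_tensorPow, trace_cosetState_mul_cosetState,
    Complex.ofReal_expect]
  push_cast
  rfl

theorem card_mul_re_trace_mul_self_sub_cosetMixture_le [DecidableEq G] {𝓗 : Finset (Subgroup G)}
    (h𝓗 : 𝓗.Nonempty) (htriv : ∀ H ∈ 𝓗, ∀ H' ∈ 𝓗, H ≠ H' → Nat.card ↥(H ⊓ H') = 1) (k : ℕ) :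
    Fintype.card (Fin k → G) *
        (((Fintype.card (Fin k → G) : ℂ)⁻¹ • 1 - cosetMixture 𝓗 k) *
          ((Fintype.card (Fin k → G) : ℂ)⁻¹ • 1 - cosetMixture 𝓗 k)).trace.re ≤
      ((𝓗.sup fun H => Nat.card ↥H : ℕ) : ℝ) ^ k / (𝓗.card : ℝ) := by
  set p : ℝ := ((𝓗.sup fun H => Nat.card ↥H : ℕ) : ℝ)
  have hm : (0 : ℝ) < (𝓗.card : ℝ) := by exact_mod_cast card_pos.mpr h𝓗
  have hG : (0 : ℝ) < Fintype.card G := by exact_mod_cast Fintype.card_pos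
  have hcollision : (Fintype.card G : ℝ) ^ k * (cosetMixture 𝓗 k * cosetMixture 𝓗 k).trace.re ≤
      (p ^ k + ((𝓗.card : ℝ) - 1)) / (𝓗.card : ℝ) := by
    rw [trace_cosetMixture_mul_self, Complex.ofReal_re, mul_expect]
    refine expect_le h𝓗 fun H hH => ?_
    rw [mul_expect]
    simp_rw [div_pow, mul_div_cancel₀ _ (pow_pos hG k).ne']
    exact expect_card_inf_pow_le htriv hH k
  have hsplit : (p ^ k + ((𝓗.card : ℝ) - 1)) / 𝓗.card = p ^ k / 𝓗.card + 1 - 1 / 𝓗.card := by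
    field_simp
    ring
  have hN : (Fintype.card (Fin k → G) : ℝ) = (Fintype.card G : ℝ) ^ k := by simp
  rw [trace_mul_self_inv_card_smul_one_sub (trace_cosetMixture h𝓗 k), Complex.sub_re,
    ← Complex.ofReal_natCast, ← Complex.ofReal_inv, Complex.ofReal_re, mul_sub,
    mul_inv_cancel₀ (by positivity), hN]
  have : 0 < 1 / (𝓗.card : ℝ) := by positivity
  linarith

end CosetMixture

theorem tcs_decision_bound_general {G : Type*} [Group G] [Fintype G] [DecidableEq G]
    (𝓗 : Finset (Subgroup G)) (h𝓗 : 𝓗.Nonempty)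
    (htriv : ∀ H ∈ 𝓗, ∀ H' ∈ 𝓗, H ≠ H' → Nat.card ↥(H ⊓ H') = 1)
    (k : ℕ) (M₀ M₁ : Matrix (Fin k → G) (Fin k → G) ℂ)
    (h₀ : M₀.PosSemidef) (h₁ : M₁.PosSemidef) (hsum : M₀ + M₁ = 1) :
    min ((M₀ * tensorPow ((1 / (Fintype.card G : ℂ)) • (1 : Matrix G G ℂ)) k).trace).re
        (𝓗.inf' h𝓗 fun H => ((M₁ * tensorPow (cosetState H) k).trace).re) ≤
      1/2 + (1/4) * Real.sqrt (((𝓗.sup fun H => Nat.card ↥H : ℕ) : ℝ) ^ k / (𝓗.card : ℝ)) := by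
  set X := (Fintype.card (Fin k → G) : ℂ)⁻¹ • (1 : Matrix (Fin k → G) (Fin k → G) ℂ) -
    cosetMixture 𝓗 k
  have hX : X.IsHermitian :=
    ((IsSelfAdjoint.natCast _).inv₀.smul (.one _)).sub (isHermitian_cosetMixture 𝓗 k)
  have hXtr : X.trace = 0 := by
    rw [Matrix.trace_sub, trace_cosetMixture h𝓗, Matrix.trace_smul, Matrix.trace_one, smul_eq_mul,
      inv_mul_cancel₀ (Nat.cast_ne_zero.mpr Fintype.card_ne_zero), sub_self]
  rw [tensorPow_inv_card_smul_one]
  calc _ ≤ 1 / 2 + (M₀ * X).trace.re / 2 :=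
        min_re_trace_le_half_add_re_trace_mul_sub_expect h𝓗 _
          (fun H _ => trace_tensorPow_cosetState H k) hsum
    _ ≤ 1 / 2 + √(Fintype.card (Fin k → G) * (X * X).trace.re) / 2 / 2 := by
        gcongr
        exact re_trace_mul_le_sqrt_card_mul_re_trace_mul_self_div_two h₀
          (by rwa [← eq_sub_of_add_eq' hsum]) hX hXtr
    _ = 1 / 2 + 1 / 4 * √(Fintype.card (Fin k → G) * (X * X).trace.re) := by ring
    _ ≤ _ := by
        gcongr
        exact card_mul_re_trace_mul_self_sub_cosetMixture_le h𝓗 htriv k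

/-- Decision (TCS) bound: for any two-outcome POVM on k copies, the worst-case success
probability is at most 1/2 + (1/4)√((max |H|)^k / |𝓗|). -/
theorem tcs_decision_bound {G : Type*} [Group G] [Fintype G] [DecidableEq G]
    (𝓗 : Finset (Subgroup G)) (h𝓗 : 𝓗.Nonempty)
    (hprime : ∀ H ∈ 𝓗, (Nat.card ↥H).Prime)
    (htriv : ∀ H ∈ 𝓗, ∀ H' ∈ 𝓗, H ≠ H' → Nat.card ↥(H ⊓ H') = 1)
    (k : ℕ) (M₀ M₁ : Matrix (Fin k → G) (Fin k → G) ℂ)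
    (h₀ : M₀.PosSemidef) (h₁ : M₁.PosSemidef) (hsum : M₀ + M₁ = 1) :
    min ((M₀ * tensorPow ((1 / (Fintype.card G : ℂ)) • (1 : Matrix G G ℂ)) k).trace).re
        (𝓗.inf' h𝓗 fun H => ((M₁ * tensorPow (cosetState H) k).trace).re) ≤
      1/2 + (1/4) * Real.sqrt (((𝓗.sup fun H => Nat.card ↥H : ℕ) : ℝ) ^ k / (𝓗.card : ℝ)) :=
  tcs_decision_bound_general 𝓗 h𝓗 htriv k M₀ M₁ h₀ h₁ hsum
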